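/- Fix δ ∈ {0,1}. There is a constant C (depending only on δ) such that for every s ∈ ℂ with Re(s) = 0, the double series Ă_δ(s) = Σ_{±} (±1)^δ Σ_{c≥1} c^s Σ_{n≥1, gcd(n,c)=1} e(± n̄/c)/√(cn) · Θ̆_s(∓ 2πi/(cn)) converges absolutely and satisfies |Ă_δ(s)| ≤ C/(1 + |s|). -/

import Mathlib

open Complex

noncomputable section

/-- `e(x) = exp(2πix)`. -/
def e2pi (x : ℝ) : ℂ := Complex.exp (2 * Real.pi * Complex.I * x)

/-- Sign attached to a boolean: `true ↦ +1`, `false ↦ −1`. -/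
def sg (b : Bool) : ℝ := if b then 1 else -1

/-- The `n`-th term of the series defining `Θ̆_s(z) = Σ_{n≥1} ((1/2)_n/((1−s)_n n!)) z^n`. -/
def thetaTerm (s z : ℂ) (n : ℕ) : ℂ :=
  (ascPochhammer ℂ n).eval (1/2 : ℂ) * z ^ n /
    ((ascPochhammer ℂ n).eval (1 - s) * (n.factorial : ℂ))

/-- The regularized Kummer function `Θ̆_s(z)`. -/
def breveTheta (s z : ℂ) : ℂ := ∑' n : ℕ, thetaTerm s z (n + 1)

/-- The `(±, c, n)`-term of the double series `Ă_δ(s)`: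
`(±1)^δ · c^s · e(± n̄/c)/√(cn) · Θ̆_s(∓ 2πi/(cn))` when `gcd(n,c) = 1`, and `0` otherwise.
Here `n̄` is the inverse of `n` modulo `c`. -/
def ATermD (δ : ℕ) (s : ℂ) (b : Bool) (c n : ℕ) : ℂ :=
  if Nat.gcd n c = 1 then
    ((sg b : ℝ) : ℂ) ^ δ * (c : ℂ) ^ s *
      e2pi (sg b * ((((n : ZMod c))⁻¹.val : ℝ)) / c) / (Real.sqrt ((c : ℝ) * n) : ℂ) *
      breveTheta s (-((sg b : ℝ) : ℂ) * (2 * Real.pi * Complex.I) / ((c : ℂ) * n))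
  else 0

lemma asc_half_le (m : ℕ) : ‖(ascPochhammer ℂ m).eval (1/2 : ℂ)‖ ≤ m.factorial := by
  induction m with
  | zero => simp
  | succ k ih =>
    rw [ascPochhammer_succ_eval, Nat.factorial_succ]
    calc ‖(ascPochhammer ℂ k).eval (1/2 : ℂ) * (1/2 + k)‖
        = ‖(ascPochhammer ℂ k).eval (1/2 : ℂ)‖ * ‖(1/2 + k : ℂ)‖ := norm_mul _ _
      _ ≤ (k.factorial : ℝ) * (k+1) := by
          apply mul_le_mul ih ?_ (norm_nonneg _) (Nat.cast_nonneg _)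
          have : ((1:ℂ)/2 + k) = (((1:ℝ)/2 + k : ℝ) : ℂ) := by push_cast; ring
          rw [this, Complex.norm_real, Real.norm_eq_abs, _root_.abs_of_nonneg (by positivity)]
          have : (0:ℝ) ≤ k := Nat.cast_nonneg k
          linarith
      _ = ((k+1) * k.factorial : ℕ) := by push_cast; ring

lemma asc_low (s : ℂ) (hs : s.re = 0) (m : ℕ) :
    ((m+1).factorial : ℝ) * ‖1 - s‖ ≤ ‖(ascPochhammer ℂ (m+1)).eval (1 - s)‖ := by
  induction m with
  | zero => simp [ascPochhammer_one]
  | succ k ih =>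
    rw [ascPochhammer_succ_eval, norm_mul]
    have h2 : (1:ℝ) + ((k:ℝ)+1) ≤ ‖(1 - s + (k+1) : ℂ)‖ := by
      have := Complex.re_le_norm (1 - s + (k+1))
      simpa [Complex.add_re, Complex.sub_re, hs] using this
    have h2' : ((k:ℝ)+2) ≤ ‖(1 - s + (k+1) : ℂ)‖ := by linarith
    calc ((k+2).factorial : ℝ) * ‖1 - s‖
        = ((k+1).factorial : ℝ) * ‖1 - s‖ * ((k:ℝ)+2) := by
          rw [Nat.factorial_succ]; push_cast; ring
      _ ≤ ‖(ascPochhammer ℂ (k+1)).eval (1 - s)‖ * ‖(1 - s + (k+1) : ℂ)‖ := by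
          apply mul_le_mul ih h2' (by linarith [Nat.cast_nonneg (α := ℝ) k]) (norm_nonneg _)
      _ = ‖(ascPochhammer ℂ (k+1)).eval (1 - s)‖ * ‖(1 - s + ((k+1:ℕ):ℂ))‖ := by push_cast; ring_nf

lemma one_le_L (s : ℂ) (hs : s.re = 0) : 1 ≤ ‖1 - s‖ := by
  have := Complex.re_le_norm (1 - s)
  simp only [Complex.sub_re, Complex.one_re, hs, sub_zero] at this
  simpa using this

lemma theta_term_bound (s z : ℂ) (hs : s.re = 0) (m : ℕ) :
    ‖thetaTerm s z (m+1)‖ ≤ ‖z‖^(m+1) / (((m+1).factorial : ℝ) * ‖1 - s‖) := by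
  have hL := one_le_L s hs
  have hfac : (0:ℝ) < ((m+1).factorial : ℝ) := by positivity
  rw [thetaTerm, norm_div, norm_mul, norm_mul, norm_pow]
  calc ‖(ascPochhammer ℂ (m+1)).eval (1/2 : ℂ)‖ * ‖z‖^(m+1) /
        (‖(ascPochhammer ℂ (m+1)).eval (1 - s)‖ * ‖((m+1).factorial : ℂ)‖)
      ≤ ((m+1).factorial : ℝ) * ‖z‖^(m+1) /
        ((((m+1).factorial : ℝ) * ‖1 - s‖) * ((m+1).factorial : ℝ)) := by
        apply div_le_div₀ (by positivity)
          (mul_le_mul_of_nonneg_right (asc_half_le (m+1)) (by positivity))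
          (by positivity)
        have : ‖(((m+1).factorial : ℕ) : ℂ)‖ = ((m+1).factorial : ℝ) := by
          simp
        rw [this]
        exact mul_le_mul_of_nonneg_right (asc_low s hs m) (le_of_lt hfac)
    _ = ‖z‖^(m+1) / (((m+1).factorial : ℝ) * ‖1 - s‖) := by
        rw [show (((m+1).factorial : ℝ) * ‖1 - s‖) * ((m+1).factorial : ℝ)
             = ((m+1).factorial : ℝ) * (((m+1).factorial : ℝ) * ‖1 - s‖) from by ring,
           mul_div_mul_left _ _ (ne_of_gt hfac)]

lemma breve_bound (s z : ℂ) (hs : s.re = 0) (hz : ‖z‖ ≤ 2 * Real.pi) :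
    ‖breveTheta s z‖ ≤ ‖z‖ * Real.exp (2 * Real.pi) / ‖1 - s‖ := by
  have hL := one_le_L s hs
  have hL0 : (0:ℝ) < ‖1 - s‖ := lt_of_lt_of_le one_pos hL
  set g : ℕ → ℝ := fun m => ‖z‖ / ‖1 - s‖ * ((2 * Real.pi)^m / m.factorial) with hg
  have hgsum : Summable g := (Real.summable_pow_div_factorial (2*Real.pi)).mul_left _
  have hterm : ∀ m : ℕ, ‖thetaTerm s z (m+1)‖ ≤ g m := by
    intro m
    refine (theta_term_bound s z hs m).trans ?_
    rw [hg]
    have h1 : ‖z‖^(m+1) ≤ ‖z‖ * (2*Real.pi)^m := by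
      rw [pow_succ']
      exact mul_le_mul_of_nonneg_left (pow_le_pow_left₀ (norm_nonneg z) hz m) (norm_nonneg z)
    have h2 : (m.factorial : ℝ) * ‖1 - s‖ ≤ ((m+1).factorial : ℝ) * ‖1 - s‖ := by
      apply mul_le_mul_of_nonneg_right _ (le_of_lt hL0)
      exact_mod_cast Nat.factorial_le (Nat.le_succ m)
    calc ‖z‖^(m+1) / (((m+1).factorial : ℝ) * ‖1 - s‖)
        ≤ (‖z‖ * (2*Real.pi)^m) / ((m.factorial : ℝ) * ‖1 - s‖) :=
          div_le_div₀ (by positivity) h1 (by positivity) h2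
      _ = ‖z‖ / ‖1 - s‖ * ((2 * Real.pi)^m / m.factorial) := by
          field_simp
  have hnsum : Summable fun m => ‖thetaTerm s z (m+1)‖ :=
    Summable.of_nonneg_of_le (fun _ => norm_nonneg _) hterm hgsum
  calc ‖breveTheta s z‖ ≤ ∑' m, ‖thetaTerm s z (m+1)‖ := norm_tsum_le_tsum_norm hnsum
    _ ≤ ∑' m, g m := Summable.tsum_le_tsum hterm hnsum hgsum
    _ = ‖z‖ / ‖1 - s‖ * ∑' m, ((2 * Real.pi)^m / m.factorial) := tsum_mul_left
    _ = ‖z‖ * Real.exp (2 * Real.pi) / ‖1 - s‖ := by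
        rw [Real.exp_eq_exp_ℝ, NormedSpace.exp_eq_tsum_div]
        ring

lemma norm_e2pi (x : ℝ) : ‖e2pi x‖ = 1 := by
  rw [e2pi, Complex.norm_exp]
  have : (2 * ↑Real.pi * I * (x:ℂ)).re = 0 := by
    simp [Complex.mul_re, Complex.mul_im]
  rw [this, Real.exp_zero]

lemma norm_sg_pow (b : Bool) (δ : ℕ) : ‖((sg b : ℝ) : ℂ) ^ δ‖ = 1 := by
  rw [norm_pow, Complex.norm_real]
  cases b <;> simp [sg]

lemma L2 (s : ℂ) (hs : s.re = 0) : 1 + ‖s‖ ≤ Real.sqrt 2 * ‖1 - s‖ := by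
  have h1 : ‖s‖^2 = s.im^2 := by
    rw [Complex.sq_norm, Complex.normSq_apply, hs]; ring
  have h2 : ‖1 - s‖^2 = 1 + s.im^2 := by
    rw [Complex.sq_norm, Complex.normSq_apply]
    simp [hs]; ring
  have ha : (0:ℝ) ≤ 1 + ‖s‖ := by positivity
  calc 1 + ‖s‖ = Real.sqrt ((1 + ‖s‖)^2) := (Real.sqrt_sq ha).symm
    _ ≤ Real.sqrt ((Real.sqrt 2 * ‖1 - s‖)^2) := by
        apply Real.sqrt_le_sqrt
        rw [mul_pow, Real.sq_sqrt (by norm_num : (0:ℝ) ≤ 2)]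
        nlinarith [sq_nonneg (‖s‖ - 1)]
    _ = Real.sqrt 2 * ‖1 - s‖ := Real.sqrt_sq (by positivity)

lemma aterm_bound (δ : ℕ) (s : ℂ) (hs : s.re = 0) (b : Bool) (c n : ℕ) :
    ‖ATermD δ s b (c+1) (n+1)‖ ≤
      2*Real.pi*Real.exp (2*Real.pi) /
        ((((c:ℝ)+1)*((n:ℝ)+1)) * Real.sqrt (((c:ℝ)+1)*((n:ℝ)+1)) * ‖1 - s‖) := by
  have hL := one_le_L s hs
  have hL0 : (0:ℝ) < ‖1 - s‖ := lt_of_lt_of_le one_pos hL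
  have hC : (0:ℝ) < (c:ℝ)+1 := by positivity
  have hN : (0:ℝ) < (n:ℝ)+1 := by positivity
  have hCN : (1:ℝ) ≤ ((c:ℝ)+1)*((n:ℝ)+1) := by nlinarith [Nat.cast_nonneg (α := ℝ) c, Nat.cast_nonneg (α := ℝ) n]
  rw [ATermD]
  split
  · -- gcd = 1 case
    set z : ℂ := -((sg b : ℝ) : ℂ) * (2 * Real.pi * Complex.I) / (((c+1:ℕ) : ℂ) * ((n+1:ℕ):ℂ)) with hz
    have hsgn : ‖((sg b : ℝ) : ℂ)‖ = 1 := by cases b <;> simp [sg]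
    have hznorm : ‖z‖ = 2*Real.pi / (((c:ℝ)+1)*((n:ℝ)+1)) := by
      rw [hz, norm_div, norm_mul, norm_neg, hsgn, one_mul, norm_mul, norm_mul,
        Complex.norm_I, mul_one, norm_mul, Complex.norm_natCast, Complex.norm_natCast]
      have : ‖(2:ℂ)‖ * ‖((Real.pi:ℝ):ℂ)‖ = 2 * Real.pi := by
        simp [Complex.norm_real, Real.pi_nonneg, abs_of_nonneg]
      rw [this]
      push_cast
      ring
    have hzle : ‖z‖ ≤ 2*Real.pi := by
      rw [hznorm]
      exact div_le_self (by positivity) hCN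
    have hbt := breve_bound s z hs hzle
    have hcpow : ‖((c+1:ℕ) : ℂ) ^ s‖ = 1 := by
      rw [show ((c+1:ℕ):ℂ) = (((c+1:ℕ):ℝ):ℂ) from by push_cast; ring,
        Complex.norm_cpow_eq_rpow_re_of_pos (by positivity), hs, Real.rpow_zero]
    have hsqrt : ‖((Real.sqrt (((c+1:ℕ):ℝ) * ((n+1:ℕ):ℝ)) : ℝ) : ℂ)‖
        = Real.sqrt (((c:ℝ)+1) * ((n:ℝ)+1)) := by
      rw [Complex.norm_real, Real.norm_eq_abs, _root_.abs_of_nonneg (Real.sqrt_nonneg _)]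
      push_cast
      ring_nf
    rw [norm_mul, norm_div, norm_mul, norm_mul, norm_sg_pow, one_mul, norm_e2pi, mul_one, hcpow,
      hsqrt, one_div]
    set X : ℝ := ((c:ℝ)+1) * ((n:ℝ)+1) with hX
    have hX1 : (1:ℝ) ≤ X := hCN
    have hX0 : (0:ℝ) < X := lt_of_lt_of_le one_pos hX1
    have hsq0 : (0:ℝ) < Real.sqrt X := Real.sqrt_pos.mpr hX0
    calc (Real.sqrt X)⁻¹ * ‖breveTheta s z‖
        ≤ (Real.sqrt X)⁻¹ * (‖z‖ * Real.exp (2*Real.pi) / ‖1 - s‖) := by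
          exact mul_le_mul_of_nonneg_left hbt (by positivity)
      _ = 2*Real.pi*Real.exp (2*Real.pi) / (X * Real.sqrt X * ‖1 - s‖) := by
          rw [hznorm]
          field_simp
  · simp
    positivity

def uu (m : ℕ) : ℝ := 1 / (((m:ℝ)+1) * Real.sqrt ((m:ℝ)+1))

lemma uu_summable : Summable uu := by
  have h0 : Summable (fun m : ℕ => (((m:ℝ)) ^ ((3:ℝ)/2))⁻¹) :=
    Real.summable_nat_rpow_inv.mpr (by norm_num)
  have h1 : Summable (fun m : ℕ => ((((m+1:ℕ):ℝ)) ^ ((3:ℝ)/2))⁻¹) :=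
    (summable_nat_add_iff 1).mpr h0
  refine h1.congr fun m => ?_
  have hx : (0:ℝ) < ((m:ℝ)+1) := by positivity
  rw [uu, one_div]
  congr 1
  push_cast
  rw [show (3:ℝ)/2 = 1 + 1/2 by norm_num, Real.rpow_add hx, Real.rpow_one,
    ← Real.sqrt_eq_rpow]

lemma uu_nonneg (m : ℕ) : 0 ≤ uu m := by rw [uu]; positivity

/-- For fixed `δ ∈ {0,1}` there is a constant `C` such that for every `s` with `Re s = 0`
the double series `Ă_δ(s)` converges absolutely and `|Ă_δ(s)| ≤ C/(1+|s|)`. -/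
theorem mean_value_stmt1 (δ : ℕ) (hδ : δ = 0 ∨ δ = 1) :
    ∃ C : ℝ, ∀ s : ℂ, s.re = 0 →
      Summable (fun p : Bool × ℕ × ℕ => ‖ATermD δ s p.1 (p.2.1 + 1) (p.2.2 + 1)‖) ∧
      ‖∑' p : Bool × ℕ × ℕ, ATermD δ s p.1 (p.2.1 + 1) (p.2.2 + 1)‖ ≤ C / (1 + ‖s‖) := by
  set K : ℝ := 2*Real.pi*Real.exp (2*Real.pi)*Real.sqrt 2 with hK
  have hK0 : 0 ≤ K := by rw [hK]; positivity
  set Bt : Bool × ℕ × ℕ → ℝ := fun p => K * (uu p.2.1 * uu p.2.2) with hBtdef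
  have hBt : Summable Bt := by
    have hinner : Summable (fun q : ℕ × ℕ => uu q.1 * uu q.2) :=
      uu_summable.mul_of_nonneg uu_summable uu_nonneg uu_nonneg
    have hinner' : Summable (fun q : ℕ × ℕ => K * (uu q.1 * uu q.2)) := hinner.mul_left K
    apply (summable_prod_of_nonneg ?_).mpr
    constructor
    · intro b; exact hinner'
    · exact Summable.of_finite
    · intro p
      simp only [hBtdef]
      exact mul_nonneg hK0 (mul_nonneg (uu_nonneg _) (uu_nonneg _))
  refine ⟨∑' p, Bt p, fun s hs => ?_⟩
  have hL := one_le_L s hs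
  have hL0 : (0:ℝ) < ‖1 - s‖ := lt_of_lt_of_le one_pos hL
  have hs0 : (0:ℝ) < 1 + ‖s‖ := by positivity
  have key : ∀ p : Bool × ℕ × ℕ,
      ‖ATermD δ s p.1 (p.2.1 + 1) (p.2.2 + 1)‖ ≤ Bt p / (1 + ‖s‖) := by
    rintro ⟨b, c, n⟩
    have hXsplit : (((c:ℝ)+1)*((n:ℝ)+1)) * Real.sqrt (((c:ℝ)+1)*((n:ℝ)+1))
        = ((((c:ℝ)+1)) * Real.sqrt ((c:ℝ)+1)) * ((((n:ℝ)+1)) * Real.sqrt ((n:ℝ)+1)) := by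
      rw [Real.sqrt_mul (by positivity)]; ring
    have huu : uu c * uu n * ((((c:ℝ)+1)*((n:ℝ)+1)) * Real.sqrt (((c:ℝ)+1)*((n:ℝ)+1))) = 1 := by
      rw [hXsplit, uu, uu]
      have h1 : (0:ℝ) < ((c:ℝ)+1) * Real.sqrt ((c:ℝ)+1) := by positivity
      have h2 : (0:ℝ) < ((n:ℝ)+1) * Real.sqrt ((n:ℝ)+1) := by positivity
      field_simp
    refine (aterm_bound δ s hs b c n).trans ?_
    rw [div_le_div_iff₀ (by positivity) hs0]
    calc 2*Real.pi*Real.exp (2*Real.pi) * (1 + ‖s‖)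
        ≤ 2*Real.pi*Real.exp (2*Real.pi) * (Real.sqrt 2 * ‖1 - s‖) :=
          mul_le_mul_of_nonneg_left (L2 s hs) (by positivity)
      _ = K * ‖1 - s‖ * 1 := by rw [hK]; ring
      _ = K * ‖1 - s‖ * (uu c * uu n *
            ((((c:ℝ)+1)*((n:ℝ)+1)) * Real.sqrt (((c:ℝ)+1)*((n:ℝ)+1)))) := by rw [huu]
      _ = Bt (b, c, n) * ((((c:ℝ)+1)*((n:ℝ)+1)) * Real.sqrt (((c:ℝ)+1)*((n:ℝ)+1)) * ‖1 - s‖) := by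
          simp only [hBtdef]; ring
  have hsummable : Summable (fun p : Bool × ℕ × ℕ => ‖ATermD δ s p.1 (p.2.1 + 1) (p.2.2 + 1)‖) :=
    Summable.of_nonneg_of_le (fun _ => norm_nonneg _) key (hBt.div_const _)
  refine ⟨hsummable, ?_⟩
  calc ‖∑' p : Bool × ℕ × ℕ, ATermD δ s p.1 (p.2.1 + 1) (p.2.2 + 1)‖
      ≤ ∑' p : Bool × ℕ × ℕ, ‖ATermD δ s p.1 (p.2.1 + 1) (p.2.2 + 1)‖ :=
        norm_tsum_le_tsum_norm hsummable
    _ ≤ ∑' p : Bool × ℕ × ℕ, Bt p / (1 + ‖s‖) :=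
        Summable.tsum_le_tsum key hsummable (hBt.div_const _)
    _ = (∑' p, Bt p) / (1 + ‖s‖) := tsum_div_const

end
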